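/- Let N ≥ 1 and let S_1, …, S_N, S_{N+1} be real-valued random variables that are exchangeable and almost surely pairwise distinct. For k ∈ {1, …, N} let S_{(k)} denote the k-th smallest value among the calibration scores S_1, …, S_N only. Then for every k ∈ {1, …, N}, ℙ(S_{N+1} ≤ S_{(k)}) = k/(N+1). -/

import Mathlib

open MeasureTheory

/-- The `k`-th smallest value (k = 1, …, m) among `v 0, …, v (m-1)`. -/
noncomputable def orderStat {m : ℕ} (v : Fin m → ℝ) (k : ℕ) : ℝ :=
  ((List.ofFn v).insertionSort (· ≤ ·)).getD (k - 1) 0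

/-!
Call the rank of a score the number of scores strictly below it. Off a null set the scores
are distinct, so their ranks are a permutation of `0, …, N`; exchangeability gives every score
the same rank distribution, hence each value of the test score's rank has probability
`1 / (N + 1)`. The test score is at most the `k`-th calibration order statistic exactly when
fewer than `k` calibration scores lie below it, i.e. when its rank is `< k`.
-/

open Finset Function

theorem List.SortedLE.getElem_lt_iff_lt_countP {α : Type*} [LinearOrder α] {l : List α}
    (hl : l.SortedLE) {k : ℕ} (hk : k < l.length) (t : α) :
    l[k] < t ↔ k < l.countP (· < t) := by
  constructor
  · intro h
    have htake : ∀ a ∈ l.take (k + 1), a < t := by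
      intro a ha
      obtain ⟨j, hj, rfl⟩ := List.getElem_of_mem ha
      rw [List.getElem_take]
      exact (hl.getElem_le_getElem_of_le (by simp at hj; omega)).trans_lt h
    calc k < (l.take (k + 1)).length := by simp; omega
      _ = (l.take (k + 1)).countP (· < t) := (List.countP_eq_length.2 (by simpa using htake)).symm
      _ ≤ l.countP (· < t) := (List.take_sublist _ _).countP_le
  · intro h
    by_contra! hkt
    have hdrop : (l.drop k).countP (· < t) = 0 := by
      refine List.countP_eq_zero.2 fun a ha => ?_
      obtain ⟨j, hj, rfl⟩ := List.getElem_of_mem ha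
      rw [List.getElem_drop]
      simpa using hkt.trans (hl.getElem_le_getElem_of_le (by omega))
    have htake : (l.take k).countP (· < t) ≤ k :=
      List.countP_le_length.trans (List.length_take_le _ _)
    rw [← List.take_append_drop k l, List.countP_append, hdrop] at h
    omega

theorem List.countP_ofFn {α : Type*} {m : ℕ} (v : Fin m → α) (p : α → Bool) :
    (List.ofFn v).countP p = #{i | p (v i)} := by
  induction m with
  | zero => simp
  | succ m ih =>
    rw [List.ofFn_succ, List.countP_cons, ih, Fin.card_filter_univ_succ]
    split_ifs <;> simp_all

theorem le_orderStat_iff {m : ℕ} (v : Fin m → ℝ) {k : ℕ} (hk1 : 1 ≤ k) (hk2 : k ≤ m)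
    (t : ℝ) :
    t ≤ orderStat v k ↔ #{i | v i < t} < k := by
  obtain ⟨j, rfl⟩ := Nat.exists_eq_add_of_le' hk1
  have hj : j < ((List.ofFn v).insertionSort (· ≤ ·)).length := by simp; omega
  rw [orderStat, Nat.add_sub_cancel, List.getD_eq_getElem _ _ hj, ← not_lt,
    List.sortedLE_insertionSort.getElem_lt_iff_lt_countP hj,
    (List.perm_insertionSort _ _).countP_eq, List.countP_ofFn]
  simp

section Rank

variable {ι α : Type*} [Fintype ι] [LinearOrder α]

def rank (v : ι → α) (i : ι) : ℕ := #{j | v j < v i}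

theorem rank_lt_card (v : ι → α) (i : ι) : rank v i < Fintype.card ι :=
  card_lt_univ_of_notMem (x := i) (by simp)

theorem rank_lt_rank {v : ι → α} {i j : ι} (h : v i < v j) : rank v i < rank v j :=
  card_lt_card <| (ssubset_iff_of_subset fun l hl => by
    simp only [mem_filter_univ] at hl ⊢; exact hl.trans h).2 ⟨i, by simpa using h⟩

theorem rank_injective {v : ι → α} (hv : Injective v) : Injective (rank v) := by
  intro i j hij
  by_contra hne
  rcases (hv.ne hne).lt_or_gt with h | h
  · exact (rank_lt_rank h).ne hij
  · exact (rank_lt_rank h).ne' hij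

theorem existsUnique_rank_eq {v : ι → α} (hv : Injective v) {r : ℕ}
    (hr : r < Fintype.card ι) : ∃! i, rank v i = r := by
  have hbij : Bijective fun i => (⟨rank v i, rank_lt_card v i⟩ : Fin (Fintype.card ι)) :=
    (Fintype.bijective_iff_injective_and_card _).2
      ⟨fun i j h => rank_injective hv (Fin.val_eq_of_eq h), by simp⟩
  obtain ⟨i, hi⟩ := hbij.2 ⟨r, hr⟩
  exact ⟨i, Fin.val_eq_of_eq hi,
    fun j hj => hbij.1 (Fin.ext (hj.trans (Fin.val_eq_of_eq hi).symm))⟩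

theorem rank_comp_perm (v : ι → α) (π : Equiv.Perm ι) (i : ι) :
    rank (v ∘ π) i = rank v (π i) :=
  card_equiv π (by simp)

theorem rank_last {n : ℕ} (v : Fin (n + 1) → α) :
    rank v (Fin.last n) = #{i : Fin n | v i.castSucc < v (Fin.last n)} := by
  rw [rank, card_filter, card_filter, Fin.sum_univ_castSucc]
  simp

variable {Ω : Type*} [MeasurableSpace Ω] [TopologicalSpace α] [OrderClosedTopology α]
  [SecondCountableTopology α] [MeasurableSpace α] [OpensMeasurableSpace α]

def IsExchangeable (P : Measure Ω) (X : Ω → ι → α) : Prop :=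
  ∀ π : Equiv.Perm ι, P.map (fun ω => X ω ∘ π) = P.map X

theorem measurable_rank (i : ι) : Measurable fun v : ι → α => rank v i := by
  simp only [rank, card_filter]
  exact Finset.measurable_sum _ fun j _ => Measurable.ite
    (measurableSet_lt (measurable_pi_apply j) (measurable_pi_apply i)) measurable_const
    measurable_const

theorem measurableSet_rank_eq {X : Ω → ι → α} (hX : Measurable X) (i : ι) (r : ℕ) :
    MeasurableSet {ω | rank (X ω) i = r} :=
  (measurable_rank i).comp hX (measurableSet_singleton r)

theorem IsExchangeable.measure_rank_eq_congr {P : Measure Ω} {X : Ω → ι → α}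
    (hexch : IsExchangeable P X) (hX : Measurable X) (i j : ι) (r : ℕ) :
    P {ω | rank (X ω) i = r} = P {ω | rank (X ω) j = r} := by
  classical
  have hr : MeasurableSet {v : ι → α | rank v j = r} :=
    measurable_rank j (measurableSet_singleton r)
  have hπ : Measurable fun ω => X ω ∘ Equiv.swap j i := by fun_prop
  calc P {ω | rank (X ω) i = r}
      = P.map (fun ω => X ω ∘ Equiv.swap j i) {v | rank v j = r} := by
        simp [Measure.map_apply hπ hr, rank_comp_perm]
    _ = P {ω | rank (X ω) j = r} := by rw [hexch, Measure.map_apply hX hr]; rfl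

theorem IsExchangeable.measure_rank_eq {P : Measure Ω} [IsProbabilityMeasure P]
    {X : Ω → ι → α} (hexch : IsExchangeable P X) (hX : Measurable X)
    (hinj : ∀ᵐ ω ∂P, Injective (X ω)) (i : ι) {r : ℕ} (hr : r < Fintype.card ι) :
    P {ω | rank (X ω) i = r} = (Fintype.card ι : ENNReal)⁻¹ := by
  set A : ι → Set Ω := fun j => {ω | rank (X ω) j = r}
  have hA : ∀ j, MeasurableSet (A j) := fun j => measurableSet_rank_eq hX j r
  have hdisj : Pairwise (AEDisjoint P on A) := fun j l hjl =>
    measure_eq_zero_iff_ae_notMem.2 <| hinj.mono fun ω hω ⟨hj, hl⟩ =>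
      hjl (rank_injective hω (hj.trans hl.symm))
  have hcover : P (⋃ j, A j) = 1 := by
    rw [← measure_univ (μ := P),
      ← ae_mem_iff_measure_eq (MeasurableSet.iUnion hA).nullMeasurableSet]
    exact hinj.mono fun ω hω => Set.mem_iUnion.2 (existsUnique_rank_eq hω hr).exists
  have hsum : ∑ j, P (A j) = Fintype.card ι * P (A i) := by
    rw [sum_congr rfl fun j _ => hexch.measure_rank_eq_congr hX j i r, sum_const, card_univ,
      nsmul_eq_mul]
  rw [measure_iUnion₀ hdisj fun j => (hA j).nullMeasurableSet, tsum_fintype, hsum] at hcover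
  exact ENNReal.eq_inv_of_mul_eq_one_left (by rwa [mul_comm])

theorem IsExchangeable.measure_rank_lt {P : Measure Ω} [IsProbabilityMeasure P]
    {X : Ω → ι → α} (hexch : IsExchangeable P X) (hX : Measurable X)
    (hinj : ∀ᵐ ω ∂P, Injective (X ω)) (i : ι) {k : ℕ} (hk : k ≤ Fintype.card ι) :
    P {ω | rank (X ω) i < k} = k / Fintype.card ι := by
  have hunion : {ω | rank (X ω) i < k} = ⋃ r ∈ range k, {ω | rank (X ω) i = r} := by
    ext ω; simp
  have hdisj : (range k : Set ℕ).PairwiseDisjoint fun r => {ω | rank (X ω) i = r} :=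
    fun r _ s _ hrs => Set.disjoint_left.2 fun ω hr hs => hrs (hr.symm.trans hs)
  rw [hunion, measure_biUnion_finset hdisj fun r _ => measurableSet_rank_eq hX i r,
    sum_congr rfl fun r hr => hexch.measure_rank_eq hX hinj i ((mem_range.1 hr).trans_le hk),
    sum_const, card_range, nsmul_eq_mul, div_eq_mul_inv]

end Rank

theorem ae_injective_of_measure_eq_zero {Ω ι β : Type*} [MeasurableSpace Ω] {P : Measure Ω}
    [Countable ι] {X : ι → Ω → β} (h : ∀ i j, i ≠ j → P {ω | X i ω = X j ω} = 0) :
    ∀ᵐ ω ∂P, Injective fun i => X i ω := by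
  simp only [Injective, ae_all_iff]
  intro i j
  by_cases hij : i = j
  · exact Filter.Eventually.of_forall fun _ _ => hij
  · exact (measure_eq_zero_iff_ae_notMem.1 (h i j hij)).mono fun ω hω hX => absurd hX hω

theorem prob_le_orderStat_calibration_general
    {Ω : Type*} [MeasurableSpace Ω] (P : Measure Ω) [IsProbabilityMeasure P]
    (N : ℕ) (S : Fin (N + 1) → Ω → ℝ)
    (hmeas : ∀ i, Measurable (S i))
    (hexch : ∀ π : Equiv.Perm (Fin (N + 1)),
      Measure.map (fun ω => fun i => S (π i) ω) P
        = Measure.map (fun ω => fun i => S i ω) P)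
    (hdist : ∀ i j, i ≠ j → P {ω | S i ω = S j ω} = 0)
    (k : ℕ) (hk1 : 1 ≤ k) (hk2 : k ≤ N) :
    P {ω | S (Fin.last N) ω ≤ orderStat (fun i : Fin N => S i.castSucc ω) k}
      = (k : ENNReal) / ((N : ENNReal) + 1) := by
  have hevent : {ω | S (Fin.last N) ω ≤ orderStat (fun i : Fin N => S i.castSucc ω) k}
      = {ω | rank (fun i => S i ω) (Fin.last N) < k} :=
    Set.ext fun ω => (le_orderStat_iff _ hk1 hk2 _).trans (by rw [Set.mem_ofPred_eq, rank_last])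
  have hexch' : IsExchangeable P fun ω i => S i ω := hexch
  rw [hevent, hexch'.measure_rank_lt (measurable_pi_lambda _ hmeas)
    (ae_injective_of_measure_eq_zero hdist) _ (by simp; omega), Fintype.card_fin, Nat.cast_add_one]

/-- For exchangeable, a.s. pairwise distinct real random variables
`S 0, …, S N` (calibration scores `S 0, …, S (N-1)` and test score `S N = S (Fin.last N)`),
letting `S_(k)` be the `k`-th smallest among the `N` calibration scores only, we have
`ℙ(S_{N+1} ≤ S_(k)) = k / (N + 1)` for every `k = 1, …, N`. -/
theorem prob_le_orderStat_calibration
    {Ω : Type*} [MeasurableSpace Ω] (P : Measure Ω) [IsProbabilityMeasure P]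
    (N : ℕ) (hN : 1 ≤ N) (S : Fin (N + 1) → Ω → ℝ)
    (hmeas : ∀ i, Measurable (S i))
    (hexch : ∀ π : Equiv.Perm (Fin (N + 1)),
      Measure.map (fun ω => fun i => S (π i) ω) P
        = Measure.map (fun ω => fun i => S i ω) P)
    (hdist : ∀ i j, i ≠ j → P {ω | S i ω = S j ω} = 0)
    (k : ℕ) (hk1 : 1 ≤ k) (hk2 : k ≤ N) :
    P {ω | S (Fin.last N) ω ≤ orderStat (fun i : Fin N => S i.castSucc ω) k}
      = (k : ENNReal) / ((N : ENNReal) + 1) :=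
  prob_le_orderStat_calibration_general P N S hmeas hexch hdist k hk1 hk2
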